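/- arXiv:2206.12253 — 4 statements merged into one kernel-verified Lean document; each statement's English description precedes it below -/
import Mathlib

section
/- Let X ⊆ Z ⊆ ℝ^d and let π: ℝ^d → ℝ^n be an affine map whose restriction to Z is injective. Then rc(X, Z) ≤ rc(π(X), π(Z)), where rc(A, B) denotes the minimal number of facets (inequalities) of a polyhedron P with P ∩ B = A. -/
/-! A system `A y ≤ b` describing `π(X)` within `π(Z)` pulls back along `π` to the system
`A (π x) ≤ b`, which is again linear in `x` with the same number of rows; injectivity of `π`
on `Z` makes its trace on `Z` exactly `X`. -/

open scoped BigOperators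

/-- Relaxation complexity of `X` within `Y`: the minimal number of linear
    inequalities whose solution set intersected with `Y` equals `X` (⊤ if none). -/
noncomputable def rcIn (d : ℕ) (X Y : Set (Fin d → ℝ)) : ℕ∞ :=
  ⨅ (k : ℕ) (_ : ∃ (A : Fin k → Fin d → ℝ) (b : Fin k → ℝ),
      {x ∈ Y | ∀ i, ∑ j, A i j * x j ≤ b i} = X), (k : ℕ∞)

open Matrix

lemma dotProduct_affineMap_apply {R ι κ : Type*} [CommRing R] [Fintype ι] [DecidableEq ι]
    [Fintype κ] (π : (ι → R) →ᵃ[R] (κ → R)) (a : κ → R) (x : ι → R) :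
    a ⬝ᵥ π x = (a ᵥ* LinearMap.toMatrix' π.linear) ⬝ᵥ x + a ⬝ᵥ π 0 := by
  rw [← dotProduct_mulVec, LinearMap.toMatrix'_mulVec, ← dotProduct_add]
  exact congrArg _ (congrFun π.decomp x)

lemma exists_linearSystem_comp_affineMap {d n k : ℕ} (π : (Fin d → ℝ) →ᵃ[ℝ] (Fin n → ℝ))
    (A : Fin k → Fin n → ℝ) (b : Fin k → ℝ) :
    ∃ (A' : Fin k → Fin d → ℝ) (b' : Fin k → ℝ), ∀ x : Fin d → ℝ,
      (∀ i, ∑ j, A' i j * x j ≤ b' i) ↔ ∀ i, ∑ j, A i j * π x j ≤ b i := by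
  refine ⟨fun i => A i ᵥ* LinearMap.toMatrix' π.linear, fun i => b i - A i ⬝ᵥ π 0,
    fun x => forall_congr' fun i => ?_⟩
  change _ ⬝ᵥ x ≤ _ ↔ A i ⬝ᵥ π x ≤ b i
  rw [dotProduct_affineMap_apply, le_sub_iff_add_le]

lemma Set.InjOn.sep_comp_eq_of_image_sep_eq {α β : Type*} {f : α → β} {X Z : Set α}
    {p : β → Prop} (hXZ : X ⊆ Z) (hinj : Set.InjOn f Z)
    (h : {y ∈ f '' Z | p y} = f '' X) : {x ∈ Z | p (f x)} = X := by
  ext x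
  constructor
  · rintro ⟨hxZ, hpx⟩
    obtain ⟨x', hx'X, hx'x⟩ : f x ∈ f '' X := h ▸ ⟨Set.mem_image_of_mem f hxZ, hpx⟩
    rwa [← hinj (hXZ hx'X) hxZ hx'x]
  · intro hxX
    have hfx : f x ∈ {y ∈ f '' Z | p y} := h ▸ Set.mem_image_of_mem f hxX
    exact ⟨hXZ hxX, hfx.2⟩

/-- On injective projections: if π is an affine map injective on Z and X ⊆ Z ⊆ ℝ^d,
    then rc(X, Z) ≤ rc(π(X), π(Z)). -/
theorem rc_le_of_injective_projection (d n : ℕ)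
    (X Z : Set (Fin d → ℝ)) (hXZ : X ⊆ Z)
    (π : (Fin d → ℝ) →ᵃ[ℝ] (Fin n → ℝ)) (hinj : Set.InjOn π Z) :
    rcIn d X Z ≤ rcIn n (π '' X) (π '' Z) := by
  refine le_iInf₂ fun k ⟨A, b, hAb⟩ => iInf₂_le k ?_
  obtain ⟨A', b', hA'b'⟩ := exists_linearSystem_comp_affineMap π A b
  refine ⟨A', b', ?_⟩
  simp only [hA'b']
  exact hinj.sep_comp_eq_of_image_sep_eq hXZ hAb
end

section
/- Let X ⊂ ℤ^k and Y ⊂ ℤ^ℓ be nonempty finite full-dimensional sets (dim X = k, dim Y = ℓ, with k, ℓ > 0). Then rc(X ∗ Y) ≤ rc(X) + rc(Y), where X ∗ Y = {(x, 0, 0) : x ∈ X} ∪ {(0, y, 1) : y ∈ Y} ⊂ ℤ^{k+ℓ+1} is the free join. -/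
open scoped BigOperators

def intPts (d : ℕ) : Set (Fin d → ℝ) := {x | ∀ i, ∃ z : ℤ, x i = (z : ℝ)}

noncomputable def rc (d : ℕ) (X : Set (Fin d → ℝ)) : ℕ∞ := rcIn d X (intPts d)

/-- Embedding of the first block: x ↦ (x, 0, 0). -/
def joinL (k l : ℕ) (x : Fin k → ℝ) : Fin (k + l + 1) → ℝ :=
  fun j => if h : (j : ℕ) < k then x ⟨j, h⟩ else 0

/-- Embedding of the second block: y ↦ (0, y, 1). -/
def joinR (k l : ℕ) (y : Fin l → ℝ) : Fin (k + l + 1) → ℝ :=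
  fun j => if h1 : (j : ℕ) < k then 0
    else if h : (j : ℕ) < k + l then y ⟨(j : ℕ) - k, by omega⟩ else 1

/-- The free join X ∗ Y = {(x,0,0) : x ∈ X} ∪ {(0,y,1) : y ∈ Y}. -/
def freeJoin (k l : ℕ) (X : Set (Fin k → ℝ)) (Y : Set (Fin l → ℝ)) :
    Set (Fin (k + l + 1) → ℝ) :=
  (joinL k l '' X) ∪ (joinR k l '' Y)

/-!
Given relaxations `A x ≤ b` of `X` and `C y ≤ d` of `Y`, the `m + n` inequalities
`A x ≤ (1 - z) b`, `C y ≤ z d` cut out a relaxation of `X ∗ Y`. The key fact: if `A x ≤ t b`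
for an integer vector `x` and an integer `t ≤ 0`, then for every `x₀ ∈ X` the integer vector
`u = x - t x₀` satisfies `A u ≤ 0`, so the ray `x₀ + ℕ u` stays in the finite set `X` and
`x = t x₀`. For `t < 0` this determines `x₀`, impossible since a full-dimensional set of positive
dimension has two points. Applied to `t = 1 - z` and to `C y ≤ z d`, this leaves `z ∈ {0, 1}`;
at `z = 0` the inequalities `C y ≤ 0` force `y = 0`, and at `z = 1` symmetrically `x = 0`.
-/

open Matrix

theorem eq_zero_of_forall_add_nsmul_mem {G : Type*} [AddCommGroup G] [IsAddTorsionFree G]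
    {S : Set G} (hS : S.Finite) {x u : G} (h : ∀ n : ℕ, x + n • u ∈ S) : u = 0 := by
  obtain ⟨a, b, hab, hx⟩ := hS.exists_lt_map_eq_of_forall_mem h
  obtain ⟨c, rfl⟩ := Nat.exists_eq_add_of_lt hab
  rw [add_right_inj, add_assoc, add_nsmul, left_eq_add] at hx
  exact (nsmul_eq_zero_iff_right c.succ_ne_zero).mp hx

theorem Set.nontrivial_of_affineSpan_eq_top {R V P : Type*} [Ring R] [AddCommGroup V]
    [Module R V] [AddTorsor V P] [Nontrivial P] {X : Set P} (h : affineSpan R X = ⊤) :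
    X.Nontrivial :=
  Set.not_subsingleton_iff.mp fun hs =>
    not_subsingleton P (AffineSubspace.subsingleton_of_subsingleton_span_eq_top hs h)

def intLattice (d : ℕ) : AddSubgroup (Fin d → ℝ) where
  carrier := intPts d
  add_mem' {x y} hx hy i := by
    obtain ⟨a, ha⟩ := hx i
    obtain ⟨c, hc⟩ := hy i
    exact ⟨a + c, by simp [ha, hc]⟩
  zero_mem' _ := ⟨0, by simp⟩
  neg_mem' {x} hx i := by
    obtain ⟨a, ha⟩ := hx i
    exact ⟨-a, by simp [ha]⟩

theorem mem_intLattice {d : ℕ} {x : Fin d → ℝ} : x ∈ intLattice d ↔ x ∈ intPts d := Iff.rfl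

def IsRelaxation {d m : ℕ} (X : Set (Fin d → ℝ)) (A : Matrix (Fin m) (Fin d) ℝ)
    (b : Fin m → ℝ) : Prop :=
  {x ∈ intPts d | A *ᵥ x ≤ b} = X

section Relaxation

variable {d m : ℕ} {X : Set (Fin d → ℝ)} {A : Matrix (Fin m) (Fin d) ℝ} {b : Fin m → ℝ}

theorem rc_le_of_isRelaxation (h : IsRelaxation X A b) : rc d X ≤ m :=
  iInf₂_le m ⟨A, b, h⟩

theorem exists_isRelaxation_of_rc_ne_top (h : rc d X ≠ ⊤) :
    ∃ (m : ℕ) (A : Matrix (Fin m) (Fin d) ℝ) (b : Fin m → ℝ), IsRelaxation X A b ∧ rc d X = m := by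
  classical
  have hex : ∃ m, ∃ (A : Matrix (Fin m) (Fin d) ℝ) (b : Fin m → ℝ), IsRelaxation X A b := by
    by_contra! hnone
    exact h (iInf₂_eq_top.mpr fun m ⟨A, b, hA⟩ => (hnone m A b hA).elim)
  obtain ⟨A, b, hA⟩ := Nat.find_spec hex
  refine ⟨Nat.find hex, A, b, hA, le_antisymm (rc_le_of_isRelaxation hA) ?_⟩
  exact le_iInf₂ fun m ⟨A', b', hA'⟩ => Nat.cast_le.mpr (Nat.find_min' hex ⟨A', b', hA'⟩)

namespace IsRelaxation

theorem mem_iff (h : IsRelaxation X A b) {x : Fin d → ℝ} :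
    x ∈ X ↔ x ∈ intPts d ∧ A *ᵥ x ≤ b := by
  rw [← h]; rfl

theorem eq_zero_of_mulVec_nonpos (h : IsRelaxation X A b) (hfin : X.Finite) {x₀ : Fin d → ℝ}
    (hx₀ : x₀ ∈ X) {u : Fin d → ℝ} (hu : u ∈ intPts d) (hAu : A *ᵥ u ≤ 0) : u = 0 := by
  refine eq_zero_of_forall_add_nsmul_mem (x := x₀) hfin fun n => h.mem_iff.mpr ⟨?_, ?_⟩
  · obtain ⟨hx₀, -⟩ := h.mem_iff.mp hx₀
    exact add_mem (mem_intLattice.mpr hx₀) (nsmul_mem (mem_intLattice.mpr hu) n)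
  · calc A *ᵥ (x₀ + n • u) = A *ᵥ x₀ + n • A *ᵥ u := by rw [mulVec_add, mulVec_smul]
      _ ≤ b + n • 0 := add_le_add (h.mem_iff.mp hx₀).2 (nsmul_le_nsmul_right hAu n)
      _ = b := by simp

theorem eq_smul_of_mulVec_le_smul (h : IsRelaxation X A b) (hfin : X.Finite) {x x₀ : Fin d → ℝ}
    (hx₀ : x₀ ∈ X) (hx : x ∈ intPts d) {t : ℤ} (ht : t ≤ 0) (hAx : A *ᵥ x ≤ (t : ℝ) • b) :
    x = (t : ℝ) • x₀ := by
  obtain ⟨hx₀int, hAx₀⟩ := h.mem_iff.mp hx₀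
  rw [← sub_eq_zero]
  refine h.eq_zero_of_mulVec_nonpos hfin hx₀ ?_ ?_
  · rw [Int.cast_smul_eq_zsmul]
    exact sub_mem (mem_intLattice.mpr hx) (zsmul_mem (mem_intLattice.mpr hx₀int) t)
  · calc A *ᵥ (x - (t : ℝ) • x₀) = A *ᵥ x - (t : ℝ) • A *ᵥ x₀ := by rw [mulVec_sub, mulVec_smul]
      _ ≤ (t : ℝ) • b - (t : ℝ) • b :=
        sub_le_sub hAx (smul_le_smul_of_nonpos_left hAx₀ (by exact_mod_cast ht))
      _ = 0 := sub_self _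

theorem nonneg_of_mulVec_le_smul (h : IsRelaxation X A b) (hfin : X.Finite)
    (hX : X.Nontrivial) {x : Fin d → ℝ} (hx : x ∈ intPts d) {t : ℤ}
    (hAx : A *ᵥ x ≤ (t : ℝ) • b) : 0 ≤ t := by
  by_contra! ht
  obtain ⟨x₁, hx₁, x₂, hx₂, hne⟩ := hX
  have h₁ := h.eq_smul_of_mulVec_le_smul hfin hx₁ hx ht.le hAx
  have h₂ := h.eq_smul_of_mulVec_le_smul hfin hx₂ hx ht.le hAx
  exact hne (smul_right_injective _ (by exact_mod_cast ht.ne) (h₁.symm.trans h₂))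

end IsRelaxation

end Relaxation

def joinCoords {α : Type*} {k l : ℕ} (x : Fin k → α) (y : Fin l → α) (z : α) :
    Fin (k + l + 1) → α :=
  Fin.snoc (Fin.append x y) z

section JoinCoords

variable {α : Type*} {k l : ℕ}

theorem joinCoords_surjective (w : Fin (k + l + 1) → α) :
    ∃ x y z, joinCoords x y z = w :=
  ⟨_, _, _, by rw [joinCoords, Fin.append_castAdd_natAdd, Fin.snoc_init_self]⟩

theorem joinCoords_inj {x x' : Fin k → α} {y y' : Fin l → α} {z z' : α} :
    joinCoords x y z = joinCoords x' y' z' ↔ x = x' ∧ y = y' ∧ z = z' := by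
  rw [joinCoords, joinCoords, Fin.snoc_inj]
  change Fin.appendEquiv k l (x, y) = Fin.appendEquiv k l (x', y') ∧ _ ↔ _
  rw [(Fin.appendEquiv k l).apply_eq_iff_eq, Prod.mk.injEq, and_assoc]

theorem joinCoords_dotProduct [NonUnitalNonAssocSemiring α] (a x : Fin k → α) (c y : Fin l → α)
    (e z : α) : joinCoords a c e ⬝ᵥ joinCoords x y z = a ⬝ᵥ x + c ⬝ᵥ y + e * z := by
  simp [joinCoords, dotProduct, Fin.sum_univ_castSucc, Fin.sum_univ_add]

theorem joinCoords_mem_intPts {x : Fin k → ℝ} {y : Fin l → ℝ} {z : ℝ} :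
    joinCoords x y z ∈ intPts (k + l + 1) ↔ x ∈ intPts k ∧ y ∈ intPts l ∧ ∃ n : ℤ, z = n := by
  simp [intPts, joinCoords, Fin.forall_fin_succ', Fin.forall_fin_add, -Fin.castSucc_natAdd,
    and_assoc]

theorem joinL_eq_joinCoords (x : Fin k → ℝ) : joinL k l x = joinCoords x 0 0 := by
  funext j
  refine Fin.lastCases ?_ (fun j => Fin.addCases (fun i => ?_) (fun i => ?_) j) j <;>
    simp [joinL, joinCoords, -Fin.castSucc_natAdd]

theorem joinR_eq_joinCoords (y : Fin l → ℝ) : joinR k l y = joinCoords 0 y 1 := by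
  funext j
  refine Fin.lastCases ?_ (fun j => Fin.addCases (fun i => ?_) (fun i => ?_) j) j <;>
    simp [joinR, joinCoords, -Fin.castSucc_natAdd]

end JoinCoords

def freeJoinMatrix {k l m n : ℕ} (A : Matrix (Fin m) (Fin k) ℝ) (b : Fin m → ℝ)
    (C : Matrix (Fin n) (Fin l) ℝ) (d : Fin n → ℝ) : Matrix (Fin (m + n)) (Fin (k + l + 1)) ℝ :=
  of (Fin.append (fun i => joinCoords (A i) 0 (b i)) (fun i => joinCoords 0 (C i) (-d i)))

section FreeJoin

variable {k l m n : ℕ} {A : Matrix (Fin m) (Fin k) ℝ} {b : Fin m → ℝ}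
  {C : Matrix (Fin n) (Fin l) ℝ} {d : Fin n → ℝ}

theorem freeJoinMatrix_mulVec_le_iff {x : Fin k → ℝ} {y : Fin l → ℝ} {z : ℝ} :
    freeJoinMatrix A b C d *ᵥ joinCoords x y z ≤ Fin.append b 0 ↔
      A *ᵥ x ≤ (1 - z) • b ∧ C *ᵥ y ≤ z • d := by
  simp only [Pi.le_def, Fin.forall_fin_add, freeJoinMatrix, mulVec, of_apply, Fin.append_left,
    Fin.append_right, joinCoords_dotProduct, zero_dotProduct, Pi.smul_apply, smul_eq_mul,
    Pi.zero_apply]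
  refine and_congr (forall_congr' fun i => ?_) (forall_congr' fun i => ?_) <;>
    constructor <;> intro h <;> linarith

theorem IsRelaxation.freeJoin {X : Set (Fin k → ℝ)} {Y : Set (Fin l → ℝ)}
    (hA : IsRelaxation X A b) (hC : IsRelaxation Y C d)
    (hXfin : X.Finite) (hYfin : Y.Finite) (hX : X.Nontrivial) (hY : Y.Nontrivial) :
    IsRelaxation (freeJoin k l X Y) (freeJoinMatrix A b C d) (Fin.append b 0) := by
  ext w
  obtain ⟨x, y, z, rfl⟩ := joinCoords_surjective w
  simp only [Set.mem_sep_iff, joinCoords_mem_intPts, freeJoinMatrix_mulVec_le_iff,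
    _root_.freeJoin, Set.mem_union, Set.mem_image, joinL_eq_joinCoords, joinR_eq_joinCoords,
    joinCoords_inj]
  constructor
  · rintro ⟨⟨hx, hy, n, rfl⟩, hAx, hCy⟩
    have hn_nonneg : 0 ≤ n := hC.nonneg_of_mulVec_le_smul hYfin hY hy hCy
    have hn_le_one : 0 ≤ 1 - n := hA.nonneg_of_mulVec_le_smul hXfin hX hx (by push_cast; exact hAx)
    obtain rfl | rfl : n = 0 ∨ n = 1 := by omega
    · left
      exact ⟨x, hA.mem_iff.mpr ⟨hx, by simpa using hAx⟩, rfl,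
        (hC.eq_zero_of_mulVec_nonpos hYfin hY.nonempty.some_mem hy (by simpa using hCy)).symm,
        by simp⟩
    · right
      exact ⟨y, hC.mem_iff.mpr ⟨hy, by simpa using hCy⟩,
        (hA.eq_zero_of_mulVec_nonpos hXfin hX.nonempty.some_mem hx (by simpa using hAx)).symm,
        rfl, by simp⟩
  · rintro (⟨x, hx, rfl, rfl, rfl⟩ | ⟨y, hy, rfl, rfl, rfl⟩)
    · obtain ⟨hxint, hAx⟩ := hA.mem_iff.mp hx
      exact ⟨⟨hxint, mem_intLattice.mp (zero_mem _), 0, by simp⟩, by simpa using hAx, by simp⟩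
    · obtain ⟨hyint, hCy⟩ := hC.mem_iff.mp hy
      exact ⟨⟨mem_intLattice.mp (zero_mem _), hyint, 1, by simp⟩, by simp, by simpa using hCy⟩

end FreeJoin

theorem rc_freeJoin_le_general (k l : ℕ) (hk : 0 < k) (hl : 0 < l)
    (X : Set (Fin k → ℝ)) (Y : Set (Fin l → ℝ))
    (hXfin : X.Finite) (hYfin : Y.Finite)
    (hXdim : affineSpan ℝ X = ⊤) (hYdim : affineSpan ℝ Y = ⊤) :
    rc (k + l + 1) (freeJoin k l X Y) ≤ rc k X + rc l Y := by
  rcases eq_or_ne (rc k X) ⊤ with hX | hX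
  · simp [hX]
  rcases eq_or_ne (rc l Y) ⊤ with hY | hY
  · simp [hY]
  have := Fin.pos_iff_nonempty.mp hk
  have := Fin.pos_iff_nonempty.mp hl
  obtain ⟨m, A, b, hA, hm⟩ := exists_isRelaxation_of_rc_ne_top hX
  obtain ⟨n, C, d, hC, hn⟩ := exists_isRelaxation_of_rc_ne_top hY
  rw [hm, hn, ← Nat.cast_add]
  exact rc_le_of_isRelaxation (hA.freeJoin hC hXfin hYfin
    (Set.nontrivial_of_affineSpan_eq_top hXdim) (Set.nontrivial_of_affineSpan_eq_top hYdim))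

/-- Sub-additivity of the relaxation complexity under free joins. -/
theorem rc_freeJoin_le (k l : ℕ) (hk : 0 < k) (hl : 0 < l)
    (X : Set (Fin k → ℝ)) (Y : Set (Fin l → ℝ))
    (hXne : X.Nonempty) (hYne : Y.Nonempty)
    (hXfin : X.Finite) (hYfin : Y.Finite)
    (hXint : X ⊆ intPts k) (hYint : Y ⊆ intPts l)
    (hXdim : affineSpan ℝ X = ⊤) (hYdim : affineSpan ℝ Y = ⊤) :
    rc (k + l + 1) (freeJoin k l X Y) ≤ rc k X + rc l Y :=
  rc_freeJoin_le_general k l hk hl X Y hXfin hYfin hXdim hYdim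
end

section
/- Let h(x_1,…,x_k) = (2x_k − 1)·(Σ_{i=1}^{k−1} x_i)^2 on {0,1}^k, and let π be a permutation of [k−1]. Then the inequality x_{k+1} ≤ Σ_{i=1}^{k−1} (2i − 1) x_{π(i)} is valid for every point (x, h(x)) with x ∈ {0,1}^k, and holds with equality exactly for the points (0,0), (e_k, 0), and (e_k + Σ_{i=1}^t e_{π(i)}, t²) for t = 1,…,k−1. -/
open scoped BigOperators

def cube (k : ℕ) : Set (Fin (k + 1) → ℝ) := {x | ∀ i, x i = 0 ∨ x i = 1}

noncomputable def ht (k : ℕ) (x : Fin (k + 1) → ℝ) : ℝ :=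
  (2 * x (Fin.last k) - 1) * (∑ i : Fin k, x i.castSucc) ^ 2

/-!
For a 0/1 point `x`, let `s` be the set of 0-based positions `i` with `x_{π(i)} = 1`. Both sides
of the inequality only depend on `x_{k+1}` and `s`: the left side is `±#s²` and the right side is
`∑_{a ∈ s} (2a + 1)`, which is at least `1 + 3 + ⋯ + (2#s - 1) = #s²`, with equality exactly when
`s = {0, …, #s - 1}`. Hence for `x_{k+1} = 0` equality forces `s = ∅`, i.e. `x = 0`, and for
`x_{k+1} = 1` it forces `x` to be a staircase point.
-/

open Finset

namespace Finset

theorem sum_range_two_mul_add_one (n : ℕ) : ∑ i ∈ range n, (2 * i + 1) = n ^ 2 := by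
  induction n with
  | zero => simp
  | succ n ih => rw [sum_range_succ, ih]; ring

theorem card_le_of_forall_lt {s : Finset ℕ} {n : ℕ} (h : ∀ a ∈ s, a < n) : #s ≤ n := by
  simpa using card_le_card (show s ⊆ range n from fun a ha => mem_range.2 (h a ha))

theorem sq_card_le_sum_two_mul_add_one (s : Finset ℕ) : #s ^ 2 ≤ ∑ a ∈ s, (2 * a + 1) := by
  induction s using Finset.induction_on_max with
  | empty => simp
  | insert a s hlt ih =>
    have ha : a ∉ s := fun h => (hlt a h).false
    have hcard : #s ≤ a := card_le_of_forall_lt hlt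
    rw [card_insert_of_notMem ha, sum_insert ha]
    nlinarith

theorem sum_two_mul_add_one_eq_sq_card_iff {s : Finset ℕ} :
    ∑ a ∈ s, (2 * a + 1) = #s ^ 2 ↔ s = range #s := by
  refine ⟨fun h => ?_, fun h => by rw [h, sum_range_two_mul_add_one, card_range]⟩
  induction s using Finset.induction_on_max with
  | empty => simp
  | insert a s hlt ih =>
    have ha : a ∉ s := fun h => (hlt a h).false
    have hcard : #s ≤ a := card_le_of_forall_lt hlt
    have hle := sq_card_le_sum_two_mul_add_one s
    rw [card_insert_of_notMem ha, sum_insert ha] at h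
    -- `(#s + 1) ^ 2 = #s ^ 2 + (2 * #s + 1)` with `#s ^ 2 ≤ ∑` and `#s ≤ a`: both must be tight
    have hsa : a = #s := by nlinarith
    have hs : ∑ a ∈ s, (2 * a + 1) = #s ^ 2 := by subst hsa; nlinarith
    rw [card_insert_of_notMem ha, range_add_one, ← ih hs, hsa]

end Finset

section Cube

variable {k : ℕ} (π : Equiv.Perm (Fin k))

open Classical in
noncomputable def permSupport (x : Fin (k + 1) → ℝ) : Finset ℕ :=
  ({i : Fin k | x (π i).castSucc = 1} : Finset (Fin k)).map Fin.valEmbedding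

def staircase (t : ℕ) : Fin (k + 1) → ℝ := fun j =>
  if j = Fin.last k then 1 else if ∃ i : Fin k, (i : ℕ) < t ∧ j = (π i).castSucc then 1 else 0

variable {π} {x y : Fin (k + 1) → ℝ}

theorem mem_permSupport {i : Fin k} : (i : ℕ) ∈ permSupport π x ↔ x (π i).castSucc = 1 := by
  simp [permSupport, Fin.val_inj]

theorem card_permSupport_le : #(permSupport π x) ≤ k := by
  simpa [permSupport] using card_le_univ (α := Fin k) _

theorem permSupport_zero : permSupport π 0 = ∅ := by
  simp [permSupport]

theorem sum_mul_apply_eq_sum_permSupport (hx : x ∈ cube k) (g : ℕ → ℝ) :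
    ∑ i : Fin k, g i * x (π i).castSucc = ∑ a ∈ permSupport π x, g a := by
  classical
  rw [permSupport, sum_map, sum_filter]
  refine sum_congr rfl fun i _ => ?_
  rcases hx (π i).castSucc with h | h <;> simp [h]

theorem sum_castSucc_eq_card_permSupport (hx : x ∈ cube k) :
    ∑ i : Fin k, x i.castSucc = #(permSupport π x) := by
  rw [← Equiv.sum_comp π, card_eq_sum_ones, Nat.cast_sum, ← sum_mul_apply_eq_sum_permSupport hx]
  simp

theorem cube_ext_iff (π : Equiv.Perm (Fin k)) (hx : x ∈ cube k) (hy : y ∈ cube k) :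
    x = y ↔ x (Fin.last k) = y (Fin.last k) ∧ permSupport π x = permSupport π y := by
  refine ⟨by rintro rfl; simp, fun ⟨hlast, hsupp⟩ => funext fun j => ?_⟩
  induction j using Fin.lastCases with
  | last => exact hlast
  | cast m =>
    obtain ⟨i, rfl⟩ := π.surjective m
    have h1 : x (π i).castSucc = 1 ↔ y (π i).castSucc = 1 := by
      rw [← mem_permSupport, ← mem_permSupport, hsupp]
    rcases hx (π i).castSucc with h | h <;> rcases hy (π i).castSucc with h' | h' <;>
      simp_all

theorem zero_mem_cube : (0 : Fin (k + 1) → ℝ) ∈ cube k := fun _ => Or.inl rfl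

theorem staircase_mem_cube (t : ℕ) : staircase π t ∈ cube k := by
  intro j; unfold staircase; split_ifs <;> simp

theorem staircase_last (t : ℕ) : staircase π t (Fin.last k) = 1 := by
  simp [staircase]

theorem permSupport_staircase {t : ℕ} (htk : t ≤ k) : permSupport π (staircase π t) = range t := by
  ext n
  simp only [permSupport, staircase, Fin.castSucc_ne_last, ↓reduceIte, Fin.castSucc_inj,
    EmbeddingLike.apply_eq_iff_eq, exists_eq_right', ite_eq_left_iff, not_lt, zero_ne_one,
    imp_false, not_le, mem_map, mem_filter, mem_univ, true_and, Fin.valEmbedding_apply, mem_range]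
  exact ⟨by rintro ⟨a, ha, rfl⟩; exact ha, fun hn => ⟨⟨n, by omega⟩, hn, rfl⟩⟩

theorem eq_zero_iff_of_mem_cube (hx : x ∈ cube k) :
    x = 0 ↔ x (Fin.last k) = 0 ∧ permSupport π x = ∅ := by
  rw [cube_ext_iff π hx zero_mem_cube, permSupport_zero]
  rfl

theorem exists_eq_staircase_iff (hx : x ∈ cube k) :
    (∃ t ≤ k, x = staircase π t) ↔
      x (Fin.last k) = 1 ∧ permSupport π x = range #(permSupport π x) := by
  constructor
  · rintro ⟨t, htk, rfl⟩
    rw [staircase_last, permSupport_staircase htk, card_range]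
    exact ⟨rfl, rfl⟩
  · rintro ⟨hlast, hs⟩
    refine ⟨#(permSupport π x), card_permSupport_le,
      (cube_ext_iff π hx (staircase_mem_cube _)).2 ⟨?_, ?_⟩⟩
    · rw [hlast, staircase_last]
    · rw [permSupport_staircase card_permSupport_le]
      exact hs

end Cube

/-- The inequality x_{k+1} ≤ Σᵢ (2i−1)·x_{π(i)} is valid on the lifted hypercube,
    with equality exactly at 0, e_last, and e_last + Σ_{i≤t} e_{π(i)} (lifted). -/
theorem staircase_facet_inequality (k : ℕ) (π : Equiv.Perm (Fin k))
    (x : Fin (k + 1) → ℝ) (hx : x ∈ cube k) :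
    ht k x ≤ ∑ i : Fin k, (2 * (i : ℕ) + 1 : ℝ) * x ((π i).castSucc) ∧
    (ht k x = ∑ i : Fin k, (2 * (i : ℕ) + 1 : ℝ) * x ((π i).castSucc) ↔
      (x = 0 ∨ ∃ t : ℕ, t ≤ k ∧ ∀ j : Fin (k + 1),
        x j = if j = Fin.last k then 1
          else if ∃ i : Fin k, (i : ℕ) < t ∧ j = (π i).castSucc then 1 else 0)) := by
  simp only [← funext_iff, ← staircase.eq_1]
  have hrhs : ∑ i : Fin k, (2 * (i : ℕ) + 1 : ℝ) * x (π i).castSucc =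
      ((∑ a ∈ permSupport π x, (2 * a + 1) : ℕ) : ℝ) := by
    push_cast; exact sum_mul_apply_eq_sum_permSupport hx fun a => 2 * a + 1
  rw [ht, sum_castSucc_eq_card_permSupport hx, hrhs, eq_zero_iff_of_mem_cube hx,
    exists_eq_staircase_iff hx]
  have hle := sq_card_le_sum_two_mul_add_one (permSupport π x)
  have heq := sum_two_mul_add_one_eq_sq_card_iff (s := permSupport π x)
  generalize permSupport π x = s at hle heq ⊢
  rcases hx (Fin.last k) with hlast | hlast
  · have hS : (0 : ℝ) ≤ ∑ a ∈ s, (2 * (a : ℝ) + 1) := by positivity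
    norm_num [hlast]
    refine ⟨by nlinarith, fun h => ?_, by rintro rfl; simp⟩
    have hcard : (#s : ℝ) ^ 2 = 0 := by nlinarith [sq_nonneg (#s : ℝ)]
    simpa using hcard
  · norm_num [hlast]
    rw [← heq, eq_comm]
    exact ⟨by exact_mod_cast hle, by norm_cast⟩
end

section
/- For every k ≥ 2 there exists a family 𝓑 of subsets of [k−1] with |𝓑| ≤ 2^{k+3}·ln(k)/(k+1) such that every subset X ⊆ [k−1] either belongs to 𝓑 or is contained in some B ∈ 𝓑 with |B| = |X| + 1. -/
/-!
Weight each `j ∈ [k-1]` by its residue modulo `m ≈ (k-1) / (2 log₂ k)`, so that every residue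
class has at least `2 log₂ k` elements, and pick a target `c` whose level `{X | ∑ X ≡ c}` has at
most the average size `2^(k-1) / m`. A set `X` outside this level is covered by `X ∪ {x}` for any
`x ∉ X` of weight `c - ∑ X`; this fails only if `X` contains a whole residue class, and such sets
number at most `m · 2^(k-1-2 log₂ k)`, a lower-order term. When `k - 1 < 2 log₂ k` the family of
all sets already satisfies the bound.
-/

open Finset

section UpDomination

variable {α : Type*}

def IsUpDominating (𝓑 : Finset (Finset α)) : Prop :=
  ∀ X, X ∈ 𝓑 ∨ ∃ B ∈ 𝓑, X ⊆ B ∧ #B = #X + 1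

variable [Fintype α]

lemma isUpDominating_univ : IsUpDominating (univ : Finset (Finset α)) :=
  fun X => Or.inl (mem_univ X)

variable [DecidableEq α]

lemma card_filter_subset_eq (W : Finset α) :
    #{X : Finset α | W ⊆ X} = 2 ^ (Fintype.card α - #W) := by
  have : ({X : Finset α | W ⊆ X} : Finset _) = Icc W univ := by ext; simp
  rw [this, card_Icc_finset (subset_univ W), card_univ]

variable {G : Type*} [Fintype G] [DecidableEq G] (w : α → G)

def fiberSupersets : Finset (Finset α) :=
  {X | ∃ r, ({a | w a = r} : Finset α) ⊆ X}

lemma card_fiberSupersets_le (q : ℕ) (hq : ∀ r, q ≤ #{a | w a = r}) :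
    #(fiberSupersets w) ≤ Fintype.card G * 2 ^ (Fintype.card α - q) := by
  have hcover :
      fiberSupersets w = univ.biUnion fun r => {X | ({a | w a = r} : Finset α) ⊆ X} := by
    ext; simp [fiberSupersets]
  rw [hcover, ← smul_eq_mul, ← card_univ]
  refine card_biUnion_le.trans (sum_le_card_nsmul _ _ _ fun r _ => ?_)
  rw [card_filter_subset_eq]
  exact Nat.pow_le_pow_right two_pos (Nat.sub_le_sub_left (hq r) _)

end UpDomination

section SumLevels

variable {α G : Type*} [Fintype α] [AddCommGroup G] [Fintype G] [DecidableEq G] (w : α → G)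

def sumLevel (c : G) : Finset (Finset α) :=
  {X | ∑ a ∈ X, w a = c}

lemma exists_card_sumLevel_le : ∃ c : G,
    (#(sumLevel w c) : ℝ) ≤ 2 ^ Fintype.card α / Fintype.card G :=
  Fintype.exists_card_fiber_le_of_card_le_nsmul _ <| by
    rw [Fintype.card_finset, nsmul_eq_mul, mul_div_cancel₀ _ (by positivity)]; push_cast; rfl

variable [DecidableEq α]

lemma isUpDominating_sumLevel_union_fiberSupersets (c : G) :
    IsUpDominating (sumLevel w c ∪ fiberSupersets w) := by
  intro X
  by_cases hX : ∃ r, ({a | w a = r} : Finset α) ⊆ X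
  · exact Or.inl (mem_union_right _ (mem_filter.2 ⟨mem_univ X, hX⟩))
  obtain ⟨x, hxw, hxX⟩ := not_subset.1 (not_exists.1 hX (c - ∑ a ∈ X, w a))
  refine Or.inr ⟨insert x X, mem_union_left _ (mem_filter.2 ⟨mem_univ _, ?_⟩),
    subset_insert x X, card_insert_of_notMem hxX⟩
  rw [sum_insert hxX, (mem_filter.1 hxw).2, sub_add_cancel]

theorem exists_isUpDominating_card_le (q : ℕ) (hq : ∀ r, q ≤ #{a | w a = r}) :
    ∃ 𝓑 : Finset (Finset α), IsUpDominating 𝓑 ∧ (#𝓑 : ℝ) ≤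
      2 ^ Fintype.card α / Fintype.card G + Fintype.card G * 2 ^ (Fintype.card α - q) := by
  obtain ⟨c, hc⟩ := exists_card_sumLevel_le w
  refine ⟨_, isUpDominating_sumLevel_union_fiberSupersets w c, ?_⟩
  calc _ ≤ (#(sumLevel w c) : ℝ) + #(fiberSupersets w) := by exact_mod_cast card_union_le _ _
    _ ≤ _ := by
        gcongr
        exact_mod_cast card_fiberSupersets_le w q hq

end SumLevels

lemma div_le_card_filter_natCast_eq (n m : ℕ) [NeZero m] (r : ZMod m) :
    n / m ≤ #{j : Fin n | (j : ZMod m) = r} := by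
  have hcount := Nat.count_modEq_card (r := m) (b := n) (Nat.pos_of_neZero m) r.val
  rw [Nat.count_eq_card_filter_range] at hcount
  have : #{j : Fin n | (j : ZMod m) = r} = #{x ∈ range n | x ≡ r.val [MOD m]} := by
    rw [← card_map Fin.valEmbedding, ← Nat.Iio_eq_range, ← Fin.map_valEmbedding_univ, filter_map]
    congr 2
    ext j
    simp [← ZMod.natCast_eq_natCast_iff]
  omega

-- The constant `7` only has to satisfy `7 ≤ 16 log 2`, see `two_pow_mul_natLog_div_le`.
lemma one_div_add_div_two_pow_le {k L m : ℕ} (hL : 1 ≤ L) (hk : k < 2 ^ (L + 1)) (hm : 1 ≤ m)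
    (hlo : 2 * L * m < k) (hhi : k ≤ 2 * L * (m + 1)) :
    (1 / m + m / 2 ^ (2 * L) : ℝ) ≤ 7 * L / (k + 1) := by
  have hkm : k + 1 ≤ 5 * L * m := by nlinarith
  have hm_lt : m < 2 ^ L := by rw [pow_succ] at hk; nlinarith
  have hkm_pow : m * (k + 1) ≤ 2 * L * 2 ^ (2 * L) := by
    calc m * (k + 1) ≤ 2 ^ L * 2 ^ (L + 1) := by gcongr; omega
      _ = 2 * 2 ^ (2 * L) := by ring
      _ ≤ 2 * L * 2 ^ (2 * L) := by gcongr; omega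
  have hk0 : (0 : ℝ) < k + 1 := by positivity
  have hinv : (1 / m : ℝ) ≤ 5 * L / (k + 1) := by
    rw [div_le_div_iff₀ (by positivity) hk0, one_mul]
    exact_mod_cast hkm
  have hdiv : (m / 2 ^ (2 * L) : ℝ) ≤ 2 * L / (k + 1) := by
    rw [div_le_div_iff₀ (by positivity) hk0]
    exact_mod_cast hkm_pow
  calc (1 / m + m / 2 ^ (2 * L) : ℝ) ≤ 5 * L / (k + 1) + 2 * L / (k + 1) := add_le_add hinv hdiv
    _ = 7 * L / (k + 1) := by ring

lemma two_pow_mul_natLog_div_le {k : ℕ} (hk : 2 ≤ k) :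
    2 ^ (k - 1) * (7 * Nat.log 2 k / (k + 1)) ≤ (2 : ℝ) ^ (k + 3) * Real.log k / (k + 1) := by
  have hlog : (Nat.log 2 k : ℝ) * Real.log 2 ≤ Real.log k := by
    have := Real.natLog_le_logb k 2
    rwa [Real.logb, Nat.cast_ofNat, le_div_iff₀ (Real.log_pos one_lt_two)] at this
  have hL : 7 * (Nat.log 2 k : ℝ) ≤ 16 * Real.log k := by
    nlinarith [Real.log_two_gt_d9, (Nat.log 2 k).cast_nonneg (α := ℝ)]
  have hpow : (2 : ℝ) ^ (k + 3) = 2 ^ (k - 1) * 16 := by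
    rw [show k + 3 = k - 1 + 4 by omega, pow_add]; norm_num
  rw [hpow, mul_assoc, mul_div_assoc (2 ^ (k - 1) : ℝ)]
  gcongr

/-- There exists a dominating family 𝓑 in the Hasse diagram of the Boolean lattice
    2^{[k−1]} of size at most 2^{k+3}·ln(k)/(k+1): every X ⊆ [k−1] is either in 𝓑
    or is covered by a member of 𝓑 one level up. -/
theorem dominating_family_boolean_lattice (k : ℕ) (hk : 2 ≤ k) :
    ∃ 𝓑 : Finset (Finset (Fin (k - 1))),
      (𝓑.card : ℝ) ≤ 2 ^ (k + 3) * Real.log k / (k + 1) ∧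
      ∀ X : Finset (Fin (k - 1)),
        X ∈ 𝓑 ∨ ∃ B ∈ 𝓑, X ⊆ B ∧ B.card = X.card + 1 := by
  set L := Nat.log 2 k
  have hL : 1 ≤ L := Nat.log_pos one_lt_two hk
  suffices ∃ 𝓑 : Finset (Finset (Fin (k - 1))), IsUpDominating 𝓑 ∧
      (#𝓑 : ℝ) ≤ 2 ^ (k - 1) * (7 * L / (k + 1)) by
    obtain ⟨𝓑, h𝓑, hcard⟩ := this
    exact ⟨𝓑, hcard.trans (two_pow_mul_natLog_div_le hk), h𝓑⟩
  rcases lt_or_ge (k - 1) (2 * L) with hsmall | hlarge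
  · refine ⟨univ, isUpDominating_univ, ?_⟩
    have : (k + 1 : ℝ) ≤ 7 * L := by exact_mod_cast (by omega : k + 1 ≤ 7 * L)
    rw [card_univ, Fintype.card_finset, Fintype.card_fin, Nat.cast_pow, Nat.cast_ofNat]
    exact le_mul_of_one_le_right (by positivity) ((one_le_div (by positivity)).2 this)
  · set m := (k - 1) / (2 * L)
    have hm : 1 ≤ m := (Nat.one_le_div_iff (by omega)).2 hlarge
    have : NeZero m := ⟨by omega⟩
    have hlo : 2 * L * m ≤ k - 1 := Nat.mul_div_le (k - 1) (2 * L)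
    have hhi : k - 1 < 2 * L * (m + 1) := Nat.lt_mul_div_succ (k - 1) (by omega)
    obtain ⟨𝓑, h𝓑, hcard⟩ := exists_isUpDominating_card_le (fun j : Fin (k - 1) => (j : ZMod m))
      (2 * L) fun r => ((Nat.le_div_iff_mul_le (by omega)).2 hlo).trans
        (div_le_card_filter_natCast_eq _ _ r)
    refine ⟨𝓑, h𝓑, ?_⟩
    calc (#𝓑 : ℝ) ≤ 2 ^ (k - 1) / m + m * 2 ^ (k - 1 - 2 * L) := by simpa using hcard
      _ = 2 ^ (k - 1) * (1 / m + m / 2 ^ (2 * L)) := by rw [pow_sub₀ _ two_ne_zero hlarge]; ring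
      _ ≤ 2 ^ (k - 1) * (7 * L / (k + 1)) := by
        gcongr
        exact one_div_add_div_two_pow_le hL (Nat.lt_pow_succ_log_self one_lt_two k) hm
          (by omega) (by omega)
end
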